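/- arXiv:0905.0686 — 10 statements merged into one kernel-verified Lean document; each statement's English description precedes it below -/
import Mathlib

section
/- If the quiver Q has no oriented cycles, then every G_v-invariant polynomial function on Rep(Q, v) is constant. -/
/-!
Acyclicity gives a height function `h : I → ℕ` strictly increasing along every edge. For
`μ ≠ 0` the element of `G_v` acting by `μ ^ h i` at vertex `i` sends `x` to
`(μ ^ (h (t e) - h (s e)) • x e)_e`, so an invariant polynomial `f` takes the constant value
`f x` along this curve. Since `f` is polynomial, so is its restriction to the curve, and letting
`μ → 0` (all exponents are positive) gives `f x = f 0`.
-/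

open Polynomial

theorem exists_height_of_transGen_irrefl {α : Type*} [Fintype α] {r : α → α → Prop}
    (hr : ∀ a, ¬ Relation.TransGen r a a) : ∃ h : α → ℕ, ∀ a b, r a b → h a < h b := by
  classical
  refine ⟨fun b => (Finset.univ.filter (Relation.TransGen r · b)).card, fun a b hab => ?_⟩
  have hsub : Finset.univ.filter (Relation.TransGen r · a) ⊆
      Finset.univ.filter (Relation.TransGen r · b) := by
    intro c hc
    simp only [Finset.mem_filter, Finset.mem_univ, true_and] at hc ⊢
    exact hc.tail hab
  refine Finset.card_lt_card ((Finset.ssubset_iff_of_subset hsub).2 ⟨a, ?_, ?_⟩)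
  · simpa using Relation.TransGen.single hab
  · simpa using hr a

theorem Polynomial.eval_zero_eq_of_forall_ne_zero {R : Type*} [CommRing R] [IsDomain R]
    [Infinite R] {p : R[X]} {a : R} (hp : ∀ μ ≠ 0, p.eval μ = a) : p.eval 0 = a := by
  have hpC : p = C a := by
    refine eq_of_infinite_eval_eq p (C a) ((Set.finite_singleton 0).infinite_compl.mono ?_)
    intro μ hμ
    simpa using hp μ hμ
  simp [hpC]

theorem exists_eval_eq_comp_of_mem_adjoin {R X : Type*} [CommRing R] {S : Set (X → R)}
    {F : X → R} (hF : F ∈ Algebra.adjoin R S) (φ : R → X)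
    (hS : ∀ c ∈ S, ∃ p : R[X], ∀ μ, c (φ μ) = p.eval μ) :
    ∃ p : R[X], ∀ μ, F (φ μ) = p.eval μ := by
  induction hF using Algebra.adjoin_induction with
  | mem c hc => exact hS c hc
  | algebraMap c => exact ⟨C c, fun μ => by simp⟩
  | add a b _ _ ha hb =>
    obtain ⟨pa, hpa⟩ := ha
    obtain ⟨pb, hpb⟩ := hb
    exact ⟨pa + pb, fun μ => by simp [hpa μ, hpb μ]⟩
  | mul a b _ _ ha hb =>
    obtain ⟨pa, hpa⟩ := ha
    obtain ⟨pb, hpb⟩ := hb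
    exact ⟨pa * pb, fun μ => by simp [hpa μ, hpb μ]⟩

theorem Matrix.algebraMap_mul_mul_algebraMap {K m n : Type*} [CommSemiring K] [Fintype m]
    [Fintype n] [DecidableEq m] [DecidableEq n] (a b : K) (M : Matrix m n K) :
    algebraMap K (Matrix m m K) a * M * algebraMap K (Matrix n n K) b = (a * b) • M := by
  simp [Algebra.algebraMap_eq_smul_one, smul_smul, mul_comm]

section Quiver

variable {I E : Type*} (s t : E → I)

def HasEdge (i j : I) : Prop := ∃ e : E, s e = i ∧ t e = j

variable {s t}

theorem exists_path_of_transGen_hasEdge {i j : I} (hij : Relation.TransGen (HasEdge s t) i j) :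
    ∃ (k : ℕ) (e : Fin (k + 1) → E), (∀ m : Fin k, s (e m.succ) = t (e m.castSucc)) ∧
      s (e 0) = i ∧ t (e (Fin.last k)) = j := by
  induction hij with
  | single hij =>
    obtain ⟨e₀, hs, ht⟩ := hij
    exact ⟨0, fun _ => e₀, fun m => m.elim0, hs, ht⟩
  | tail _ hjk ih =>
    obtain ⟨k, e, hchain, hs, ht⟩ := ih
    obtain ⟨e', hs', ht'⟩ := hjk
    refine ⟨k + 1, Fin.snoc e e', fun m => ?_, ?_, by simpa using ht'⟩
    · induction m using Fin.lastCases with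
      | last => rw [Fin.succ_last, Fin.snoc_last, Fin.snoc_castSucc, hs', ht]
      | cast m => rw [Fin.succ_castSucc, Fin.snoc_castSucc, Fin.snoc_castSucc, hchain m]
    · rw [← Fin.castSucc_zero, Fin.snoc_castSucc, hs]

theorem exists_height_of_no_oriented_cycle [Fintype I]
    (hacyclic : ¬ ∃ (k : ℕ) (e : Fin (k + 1) → E),
      (∀ m : Fin k, s (e m.succ) = t (e m.castSucc)) ∧ s (e 0) = t (e (Fin.last k))) :
    ∃ h : I → ℕ, ∀ e, h (s e) < h (t e) := by
  have hirrefl : ∀ i, ¬ Relation.TransGen (HasEdge s t) i i := fun i hi => by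
    obtain ⟨k, e, hchain, hs, ht⟩ := exists_path_of_transGen_hasEdge hi
    exact hacyclic ⟨k, e, hchain, hs.trans ht.symm⟩
  obtain ⟨h, hh⟩ := exists_height_of_transGen_irrefl hirrefl
  exact ⟨h, fun e => hh _ _ ⟨e, rfl, rfl⟩⟩

theorem apply_pow_smul_eq_of_invariant {v : I → ℕ}
    {f : (∀ e : E, Matrix (Fin (v (t e))) (Fin (v (s e))) ℂ) → ℂ}
    (hinv : ∀ (g : ∀ i : I, (Matrix (Fin (v i)) (Fin (v i)) ℂ)ˣ)
      (x : ∀ e : E, Matrix (Fin (v (t e))) (Fin (v (s e))) ℂ),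
      f (fun e => (↑(g (t e)) : Matrix (Fin (v (t e))) (Fin (v (t e))) ℂ) * x e *
        (↑((g (s e))⁻¹) : Matrix (Fin (v (s e))) (Fin (v (s e))) ℂ)) = f x)
    {h : I → ℕ} (hh : ∀ e, h (s e) ≤ h (t e)) {μ : ℂ} (hμ : μ ≠ 0)
    (x : ∀ e : E, Matrix (Fin (v (t e))) (Fin (v (s e))) ℂ) :
    f (fun e => μ ^ (h (t e) - h (s e)) • x e) = f x := by
  convert hinv (fun i => Units.map (algebraMap ℂ (Matrix (Fin (v i)) (Fin (v i)) ℂ)).toMonoidHom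
    (Units.mk0 μ hμ ^ h i)) x using 2
  funext e
  simp only [← map_inv, Units.coe_map, RingHom.toMonoidHom_eq_coe, MonoidHom.coe_coe,
    Units.val_pow_eq_pow_val, Units.val_inv_eq_inv_val, Units.val_mk0,
    Matrix.algebraMap_mul_mul_algebraMap, pow_sub₀ μ hμ (hh e)]

end Quiver

theorem invariant_polynomials_constant_of_no_oriented_cycles_general
    {I E : Type} [Fintype I]
    (s t : E → I) (v : I → ℕ)
    (hacyclic : ¬ ∃ (k : ℕ) (e : Fin (k + 1) → E),
      (∀ m : Fin k, s (e m.succ) = t (e m.castSucc)) ∧ s (e 0) = t (e (Fin.last k)))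
    (f : (∀ e : E, Matrix (Fin (v (t e))) (Fin (v (s e))) ℂ) → ℂ)
    (hpoly : f ∈ Algebra.adjoin ℂ
      {c : (∀ e : E, Matrix (Fin (v (t e))) (Fin (v (s e))) ℂ) → ℂ |
        ∃ (e : E) (p : Fin (v (t e))) (q : Fin (v (s e))), c = fun x => x e p q})
    (hinv : ∀ (g : ∀ i : I, (Matrix (Fin (v i)) (Fin (v i)) ℂ)ˣ)
      (x : ∀ e : E, Matrix (Fin (v (t e))) (Fin (v (s e))) ℂ),
      f (fun e => (↑(g (t e)) : Matrix (Fin (v (t e))) (Fin (v (t e))) ℂ) * x e *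
        (↑((g (s e))⁻¹) : Matrix (Fin (v (s e))) (Fin (v (s e))) ℂ)) = f x) :
    ∃ c : ℂ, f = fun _ => c := by
  obtain ⟨h, hlt⟩ := exists_height_of_no_oriented_cycle hacyclic
  refine ⟨f 0, funext fun x => ?_⟩
  obtain ⟨p, hp⟩ := exists_eval_eq_comp_of_mem_adjoin hpoly
    (fun μ e => μ ^ (h (t e) - h (s e)) • x e) <| by
      rintro c ⟨e, i, j, rfl⟩
      exact ⟨C (x e i j) * X ^ (h (t e) - h (s e)), fun μ => by simp only [eval_mul, eval_C, eval_pow, eval_X, Matrix.smul_apply, smul_eq_mul, mul_comm]⟩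
  have hp0 : p.eval 0 = f x := eval_zero_eq_of_forall_ne_zero fun μ hμ =>
    (hp μ).symm.trans (apply_pow_smul_eq_of_invariant hinv (fun e => (hlt e).le) hμ x)
  have hcurve0 : (fun e => (0 : ℂ) ^ (h (t e) - h (s e)) • x e) = 0 := by
    funext e
    simp [zero_pow (Nat.sub_ne_zero_of_lt (hlt e))]
  rw [← hp0, ← hp, hcurve0]

/-- If the quiver `Q` (vertex set `I`, edge set `E`, source/target maps `s, t`) has no
oriented cycles, then every `G_v`-invariant polynomial function on `Rep(Q, v)` is
constant. -/
theorem invariant_polynomials_constant_of_no_oriented_cycles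
    {I E : Type} [Fintype I] [DecidableEq I] [Fintype E]
    (s t : E → I) (v : I → ℕ)
    (hacyclic : ¬ ∃ (k : ℕ) (e : Fin (k + 1) → E),
      (∀ m : Fin k, s (e m.succ) = t (e m.castSucc)) ∧ s (e 0) = t (e (Fin.last k)))
    (f : (∀ e : E, Matrix (Fin (v (t e))) (Fin (v (s e))) ℂ) → ℂ)
    (hpoly : f ∈ Algebra.adjoin ℂ
      {c : (∀ e : E, Matrix (Fin (v (t e))) (Fin (v (s e))) ℂ) → ℂ |
        ∃ (e : E) (p : Fin (v (t e))) (q : Fin (v (s e))), c = fun x => x e p q})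
    (hinv : ∀ (g : ∀ i : I, (Matrix (Fin (v i)) (Fin (v i)) ℂ)ˣ)
      (x : ∀ e : E, Matrix (Fin (v (t e))) (Fin (v (s e))) ℂ),
      f (fun e => (↑(g (t e)) : Matrix (Fin (v (t e))) (Fin (v (t e))) ℂ) * x e *
        (↑((g (s e))⁻¹) : Matrix (Fin (v (s e))) (Fin (v (s e))) ℂ)) = f x) :
    ∃ c : ℂ, f = fun _ => c :=
  invariant_polynomials_constant_of_no_oriented_cycles_general s t v hacyclic f hpoly hinv
end

section
/- (Rudakov/King: φ-semistable modules of a fixed slope form an abelian category) Let M and N be φ-semistable A-modules with slope_φ(M) = slope_φ(N), and let f : M → N be an A-module homomorphism. If ker f ≠ 0, then ker f is φ-semistable and slope_φ(ker f) = slope_φ(M); and if f is not surjective, then the cokernel N/f(M) is φ-semistable and slope_φ(N/f(M)) = slope_φ(N). -/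
/-- A left module over a ℂ-algebra `A` which is finite dimensional over ℂ. -/
structure FdMod (A : Type) [Ring A] [Algebra ℂ A] : Type 1 where
  carrier : Type
  [addCommGroup : AddCommGroup carrier]
  [moduleC : Module ℂ carrier]
  [moduleA : Module A carrier]
  [tower : IsScalarTower ℂ A carrier]
  [fd : FiniteDimensional ℂ carrier]

attribute [instance] FdMod.addCommGroup FdMod.moduleC FdMod.moduleA FdMod.tower FdMod.fd

variable {A : Type} [Ring A] [Algebra ℂ A]

/-- An `A`-submodule, viewed as a finite-dimensional module over the ℂ-algebra `A`. -/
noncomputable def FdMod.sub (M : FdMod A) (N : Submodule A M.carrier) : FdMod A where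
  carrier := ↥N
  fd := FiniteDimensional.of_injective (N.subtype.restrictScalars ℂ) Subtype.val_injective

/-- The quotient by an `A`-submodule, viewed as a finite-dimensional module over the
ℂ-algebra `A`. -/
noncomputable def FdMod.quot (M : FdMod A) (N : Submodule A M.carrier) : FdMod A where
  carrier := M.carrier ⧸ N
  fd := Module.Finite.of_surjective (N.mkQ.restrictScalars ℂ) (Submodule.mkQ_surjective N)

/-- The fdSlope of a module with respect to the additive function `φ`. -/
noncomputable def fdSlope (φ : FdMod A → ℝ) (M : FdMod A) : ℝ :=
  φ M / (Module.finrank ℂ M.carrier : ℝ)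

/-- A nonzero module is `φ`-semistable if every nonzero submodule has fdSlope at most the
fdSlope of the module. -/
def FdSemistable (φ : FdMod A → ℝ) (M : FdMod A) : Prop :=
  Nontrivial M.carrier ∧
    ∀ N : Submodule A M.carrier, N ≠ ⊥ → fdSlope φ (M.sub N) ≤ fdSlope φ M

/-!
Following King, replace the slope condition by a sign condition on the additive function
`θ = φ - μ · dim`, where `μ` is the common slope: a nonzero module is semistable of slope `μ`
exactly when `θ` vanishes on it and is nonpositive on its submodules. For `f : M → N` the
kernel and the image then both have `θ ≤ 0`, while `θ(ker f) + θ(im f) = θ(M) = 0`, so both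
vanish. Submodules of `ker f` are submodules of `M`, and a submodule `S` of `N / im f` satisfies
`θ(S) = -θ(N / P) ≤ 0`, where `P` is the preimage of `S` in `N`.
-/

open Module

theorem FdMod.finrank_sub_add_finrank_quot (M : FdMod A) (N : Submodule A M.carrier) :
    finrank ℂ (M.sub N).carrier + finrank ℂ (M.quot N).carrier = finrank ℂ M.carrier := by
  rw [add_comm, ← Submodule.finrank_quotient_add_finrank (N.restrictScalars ℂ)]
  exact congrArg (· + _) (Submodule.Quotient.restrictScalarsEquiv ℂ N).symm.finrank_eq

def IsIsoInvariant (θ : FdMod A → ℝ) : Prop :=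
  ∀ M N : FdMod A, (M.carrier ≃ₗ[A] N.carrier) → θ M = θ N

def IsAdditive (θ : FdMod A → ℝ) : Prop :=
  ∀ (M : FdMod A) (N : Submodule A M.carrier), θ M = θ (M.sub N) + θ (M.quot N)

theorem IsAdditive.apply_sub_bot {θ : FdMod A → ℝ} (hadd : IsAdditive θ)
    (hiso : IsIsoInvariant θ) (M : FdMod A) : θ (M.sub ⊥) = 0 := by
  have h := hadd M ⊥
  rw [← hiso M (M.quot ⊥) (Submodule.quotEquivOfEqBot ⊥ rfl).symm] at h
  linarith

theorem IsIsoInvariant.apply_quot_ker_eq_apply_range {θ : FdMod A → ℝ}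
    (hiso : IsIsoInvariant θ) {M N : FdMod A} (f : M.carrier →ₗ[A] N.carrier) :
    θ (M.quot (LinearMap.ker f)) = θ (N.sub (LinearMap.range f)) :=
  hiso _ _ f.quotKerEquivRange

noncomputable def kingTheta (φ : FdMod A → ℝ) (μ : ℝ) (M : FdMod A) : ℝ :=
  φ M - μ * finrank ℂ M.carrier

section kingTheta

variable {φ : FdMod A → ℝ}

theorem IsIsoInvariant.kingTheta (hiso : IsIsoInvariant φ) (μ : ℝ) :
    IsIsoInvariant (kingTheta φ μ) := fun M N e => by
  rw [_root_.kingTheta, _root_.kingTheta, hiso M N e, (e.restrictScalars ℂ).finrank_eq]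

theorem IsAdditive.kingTheta (hadd : IsAdditive φ) (μ : ℝ) :
    IsAdditive (kingTheta φ μ) := fun M N => by
  simp only [_root_.kingTheta, hadd M N, ← M.finrank_sub_add_finrank_quot N]
  push_cast
  ring

theorem fdSlope_le_iff {M : FdMod A} [Nontrivial M.carrier] (μ : ℝ) :
    fdSlope φ M ≤ μ ↔ kingTheta φ μ M ≤ 0 := by
  rw [fdSlope, div_le_iff₀ (by exact_mod_cast finrank_pos), kingTheta, sub_nonpos]

theorem fdSlope_eq_iff {M : FdMod A} [Nontrivial M.carrier] (μ : ℝ) :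
    fdSlope φ M = μ ↔ kingTheta φ μ M = 0 := by
  rw [fdSlope, div_eq_iff (by exact_mod_cast finrank_pos.ne'), kingTheta, sub_eq_zero]

end kingTheta

def ThetaSemistable (θ : FdMod A → ℝ) (M : FdMod A) : Prop :=
  θ M = 0 ∧ ∀ S : Submodule A M.carrier, θ (M.sub S) ≤ 0

theorem fdSemistable_and_fdSlope_eq_iff {φ : FdMod A → ℝ} (hiso : IsIsoInvariant φ)
    (hadd : IsAdditive φ) (μ : ℝ) (M : FdMod A) :
    FdSemistable φ M ∧ fdSlope φ M = μ ↔
      Nontrivial M.carrier ∧ ThetaSemistable (kingTheta φ μ) M := by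
  constructor
  · rintro ⟨⟨hM, hsub⟩, rfl⟩
    refine ⟨hM, (fdSlope_eq_iff _).mp rfl, fun S => ?_⟩
    by_cases hS : S = ⊥
    · subst hS
      exact ((hadd.kingTheta _).apply_sub_bot (hiso.kingTheta _) M).le
    · have : Nontrivial (M.sub S).carrier := Submodule.nontrivial_iff_ne_bot.mpr hS
      exact (fdSlope_le_iff _).mp (hsub S hS)
  · rintro ⟨hM, hzero, hsub⟩
    have hslope : fdSlope φ M = μ := (fdSlope_eq_iff μ).mpr hzero
    refine ⟨⟨hM, fun S hS => ?_⟩, hslope⟩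
    have : Nontrivial (M.sub S).carrier := Submodule.nontrivial_iff_ne_bot.mpr hS
    rw [hslope]
    exact (fdSlope_le_iff μ).mpr (hsub S)

namespace ThetaSemistable

variable {θ : FdMod A → ℝ} {M N : FdMod A}

theorem quot_nonneg (hadd : IsAdditive θ) (hM : ThetaSemistable θ M)
    (S : Submodule A M.carrier) : 0 ≤ θ (M.quot S) := by
  linarith [hadd M S, hM.1, hM.2 S]

theorem sub (hiso : IsIsoInvariant θ) (hM : ThetaSemistable θ M) {K : Submodule A M.carrier}
    (hK : θ (M.sub K) = 0) : ThetaSemistable θ (M.sub K) :=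
  ⟨hK, fun S => by
    rw [hiso _ (M.sub _) (Submodule.equivMapOfInjective K.subtype K.injective_subtype S)]
    exact hM.2 _⟩

theorem quot (hiso : IsIsoInvariant θ) (hadd : IsAdditive θ) (hM : ThetaSemistable θ M)
    {I : Submodule A M.carrier} (hI : θ (M.sub I) = 0) : ThetaSemistable θ (M.quot I) := by
  refine ⟨by linarith [hadd M I, hM.1], fun S => ?_⟩
  set P := S.comap I.mkQ
  have hIP : I ≤ P := I.ker_mkQ ▸ LinearMap.ker_le_comap I.mkQ
  have e : ((M.quot I).quot S).carrier ≃ₗ[A] (M.quot P).carrier := by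
    have e := Submodule.quotientQuotientEquivQuotient I P hIP
    rwa [Submodule.map_comap_eq_of_surjective I.mkQ_surjective S] at e
  have hquot := hM.quot_nonneg hadd P
  rw [← hiso _ _ e] at hquot
  linarith [hadd (M.quot I) S, hadd M I, hM.1]

theorem ker_eq_zero (hiso : IsIsoInvariant θ) (hadd : IsAdditive θ) (hM : ThetaSemistable θ M)
    (hN : ThetaSemistable θ N) (f : M.carrier →ₗ[A] N.carrier) :
    θ (M.sub (LinearMap.ker f)) = 0 := by
  have hcoim := hiso.apply_quot_ker_eq_apply_range f
  linarith [hadd M (LinearMap.ker f), hM.1, hM.2 (LinearMap.ker f), hN.2 (LinearMap.range f)]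

theorem range_eq_zero (hiso : IsIsoInvariant θ) (hadd : IsAdditive θ)
    (hM : ThetaSemistable θ M) (hN : ThetaSemistable θ N) (f : M.carrier →ₗ[A] N.carrier) :
    θ (N.sub (LinearMap.range f)) = 0 := by
  have hcoim := hiso.apply_quot_ker_eq_apply_range f
  linarith [hcoim, hadd M (LinearMap.ker f), hM.1, hM.ker_eq_zero hiso hadd hN f]

end ThetaSemistable

/-- **(Rudakov/King)**  Kernels and cokernels of morphisms between `φ`-semistable modules
of the same fdSlope are `φ`-semistable of that same fdSlope. -/
theorem kernel_cokernel_of_semistable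
    (φ : FdMod A → ℝ)
    (hiso : ∀ M N : FdMod A, (M.carrier ≃ₗ[A] N.carrier) → φ M = φ N)
    (hadd : ∀ (M : FdMod A) (N : Submodule A M.carrier),
      φ M = φ (M.sub N) + φ (M.quot N))
    (M N : FdMod A) (f : M.carrier →ₗ[A] N.carrier)
    (hM : FdSemistable φ M) (hN : FdSemistable φ N)
    (hslope : fdSlope φ M = fdSlope φ N) :
    (LinearMap.ker f ≠ ⊥ →
      FdSemistable φ (M.sub (LinearMap.ker f)) ∧
        fdSlope φ (M.sub (LinearMap.ker f)) = fdSlope φ M) ∧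
    (¬ Function.Surjective f →
      FdSemistable φ (N.quot (LinearMap.range f)) ∧
        fdSlope φ (N.quot (LinearMap.range f)) = fdSlope φ N) := by
  have key := fdSemistable_and_fdSlope_eq_iff hiso hadd (fdSlope φ M)
  have hθiso := IsIsoInvariant.kingTheta hiso (fdSlope φ M)
  have hθadd := IsAdditive.kingTheta hadd (fdSlope φ M)
  obtain ⟨-, hMθ⟩ := (key M).mp ⟨hM, rfl⟩
  obtain ⟨-, hNθ⟩ := (key N).mp ⟨hN, hslope.symm⟩
  refine ⟨fun hK => (key _).mpr ⟨Submodule.nontrivial_iff_ne_bot.mpr hK,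
      hMθ.sub hθiso (hMθ.ker_eq_zero hθiso hθadd hNθ f)⟩, fun hf => ?_⟩
  rw [← hslope]
  exact (key _).mpr ⟨Submodule.Quotient.nontrivial_iff.mpr (LinearMap.range_eq_top.not.mpr hf),
    hNθ.quot hθiso hθadd (hMθ.range_eq_zero hθiso hθadd hNθ f)⟩
end

section
/- (King) Let θ : I → ℝ and let x be a θ-stable representation of Q of dimension v, with ∑_{i∈I} v(i) > 0. If g = (g_i) ∈ G_v satisfies g_{t(e)} ∘ x_e = x_e ∘ g_{s(e)} for every edge e, then g is a scalar: there exists c ∈ ℂ, c ≠ 0, with g_i = c·Id_{ℂ^{v(i)}} for every i ∈ I. (Equivalently, the group G_v/ℂ× acts freely on the set of θ-stable representations.) -/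
/-- **(King)** If `x` is a `θ`-stable representation of a quiver `Q` (vertex set `I`, edge
set `E`, source/target maps `s, t`) of dimension vector `v` with `∑ᵢ v i > 0`, then any
element `g` of `G_v` commuting with `x` is a nonzero scalar; equivalently, `G_v/ℂ×` acts
freely on the set of `θ`-stable representations. -/
theorem king_stable_endomorphism_is_scalar
    {I E : Type} [Fintype I] [Fintype E] (s t : E → I) (v : I → ℕ) (θ : I → ℝ)
    (x : ∀ e : E, (Fin (v (s e)) → ℂ) →ₗ[ℂ] (Fin (v (t e)) → ℂ))
    (hv : 0 < ∑ i, v i)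
    (hstable : ∀ S : ∀ i : I, Submodule ℂ (Fin (v i) → ℂ),
      (∀ e : E, (S (s e)).map (x e) ≤ S (t e)) →
      S ≠ (fun _ => ⊥) → S ≠ (fun _ => ⊤) →
      (∑ i, θ i * (Module.finrank ℂ (S i) : ℝ)) / (∑ i, (Module.finrank ℂ (S i) : ℝ)) <
        (∑ i, θ i * (v i : ℝ)) / (∑ i, (v i : ℝ)))
    (g : ∀ i : I, (Fin (v i) → ℂ) ≃ₗ[ℂ] (Fin (v i) → ℂ))
    (hg : ∀ (e : E) (u : Fin (v (s e)) → ℂ), g (t e) (x e u) = x e (g (s e) u)) :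
    ∃ c : ℂ, c ≠ 0 ∧ ∀ (i : I) (u : Fin (v i) → ℂ), g i u = c • u := by
  classical
  obtain ⟨i0, hi0⟩ : ∃ i : I, 0 < v i := by
    by_contra h
    push_neg at h
    have : ∑ i, v i = 0 := Finset.sum_eq_zero (fun i _ => Nat.le_zero.mp (h i))
    omega
  haveI : Nonempty (Fin (v i0)) := ⟨⟨0, hi0⟩⟩
  obtain ⟨c, hc⟩ := Module.End.exists_eigenvalue
    ((g i0).toLinearMap : Module.End ℂ (Fin (v i0) → ℂ))
  obtain ⟨u0, hu0⟩ := hc.exists_hasEigenvector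
  set φ : ∀ i, (Fin (v i) → ℂ) →ₗ[ℂ] (Fin (v i) → ℂ) :=
    fun i => (g i).toLinearMap - c • LinearMap.id with hφ
  have hφapp : ∀ i u, φ i u = g i u - c • u := fun i u => rfl
  have hcomm : ∀ (e : E) (u : Fin (v (s e)) → ℂ), φ (t e) (x e u) = x e (φ (s e) u) := by
    intro e u
    simp only [hφapp, map_sub, map_smul, hg]
  have hK0 : φ i0 u0 = 0 := by
    rw [hφapp]
    exact sub_eq_zero.mpr hu0.apply_eq_smul
  have hdim : ∀ i, Module.finrank ℂ (LinearMap.range (φ i))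
      + Module.finrank ℂ (LinearMap.ker (φ i)) = v i := by
    intro i
    have := LinearMap.finrank_range_add_finrank_ker (φ i)
    simpa [Module.finrank_fin_fun] using this
  have main : ∀ i, LinearMap.ker (φ i) = ⊤ := by
    by_contra hmain
    push_neg at hmain
    obtain ⟨i1, hi1⟩ := hmain
    set K : ∀ i, Submodule ℂ (Fin (v i) → ℂ) := fun i => LinearMap.ker (φ i) with hKdef
    set M : ∀ i, Submodule ℂ (Fin (v i) → ℂ) := fun i => LinearMap.range (φ i) with hMdef
    have hdim' : ∀ i, Module.finrank ℂ (M i) + Module.finrank ℂ (K i) = v i := hdim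
    have hKsub : ∀ e : E, (K (s e)).map (x e) ≤ K (t e) := by
      intro e y hy
      obtain ⟨u, hu, rfl⟩ := hy
      have hu' : φ (s e) u = 0 := hu
      simp only [hKdef, LinearMap.mem_ker, hcomm, hu', map_zero]
    have hMsub : ∀ e : E, (M (s e)).map (x e) ≤ M (t e) := by
      intro e y hy
      obtain ⟨z, hz, rfl⟩ := hy
      obtain ⟨u, rfl⟩ := hz
      exact ⟨x e u, (hcomm e u)⟩
    have hKbot : K ≠ (fun _ => ⊥) := by
      intro h
      have : u0 ∈ K i0 := hK0
      rw [h] at this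
      exact hu0.2 this
    have hKtop : K ≠ (fun _ => ⊤) := by
      intro h
      exact hi1 (congrFun h i1)
    have hMbot : M ≠ (fun _ => ⊥) := by
      intro h
      apply hi1
      have : LinearMap.range (φ i1) = ⊥ := congrFun h i1
      rw [LinearMap.range_eq_bot] at this
      rw [this]
      exact LinearMap.ker_zero
    have hMtop : M ≠ (fun _ => ⊤) := by
      intro h
      have h1 : Module.finrank ℂ (M i0) = v i0 := by
        rw [congrFun h i0]
        simp [Module.finrank_fin_fun]
      have h2 := hdim' i0
      have h3 : Module.finrank ℂ (K i0) = 0 := by omega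
      rw [Submodule.finrank_eq_zero] at h3
      have : u0 ∈ K i0 := hK0
      rw [h3] at this
      exact hu0.2 this
    have ineqK := hstable K hKsub hKbot hKtop
    have ineqM := hstable M hMsub hMbot hMtop
    -- positivity of denominators
    have hKpos : (0 : ℝ) < ∑ i, (Module.finrank ℂ (K i) : ℝ) := by
      have : 0 < Module.finrank ℂ (K i0) := by
        rcases Nat.eq_zero_or_pos (Module.finrank ℂ (K i0)) with h | h
        · rw [Submodule.finrank_eq_zero] at h
          have : u0 ∈ K i0 := hK0
          rw [h] at this
          exact absurd this hu0.2
        · exact h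
      refine Finset.sum_pos' (fun i _ => Nat.cast_nonneg _) ⟨i0, Finset.mem_univ i0, ?_⟩
      exact_mod_cast this
    have hMpos : (0 : ℝ) < ∑ i, (Module.finrank ℂ (M i) : ℝ) := by
      have : 0 < Module.finrank ℂ (M i1) := by
        rcases Nat.eq_zero_or_pos (Module.finrank ℂ (M i1)) with h | h
        · exfalso
          rw [Submodule.finrank_eq_zero, LinearMap.range_eq_bot] at h
          apply hi1
          simp only [h, LinearMap.ker_zero]
        · exact h
      refine Finset.sum_pos' (fun i _ => Nat.cast_nonneg _) ⟨i1, Finset.mem_univ i1, ?_⟩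
      exact_mod_cast this
    have hVpos : (0 : ℝ) < ∑ i, (v i : ℝ) := by exact_mod_cast hv
    -- additivity
    have hsum1 : (∑ i, (Module.finrank ℂ (K i) : ℝ)) + (∑ i, (Module.finrank ℂ (M i) : ℝ))
        = ∑ i, (v i : ℝ) := by
      rw [← Finset.sum_add_distrib]
      apply Finset.sum_congr rfl
      intro i _
      have := hdim' i
      push_cast [← this]
      ring
    have hsum2 : (∑ i, θ i * (Module.finrank ℂ (K i) : ℝ))
        + (∑ i, θ i * (Module.finrank ℂ (M i) : ℝ)) = ∑ i, θ i * (v i : ℝ) := by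
      rw [← Finset.sum_add_distrib]
      apply Finset.sum_congr rfl
      intro i _
      have : ((Module.finrank ℂ (M i) : ℝ)) + (Module.finrank ℂ (K i) : ℝ) = v i := by
        exact_mod_cast hdim' i
      rw [← this]
      ring
    set μ : ℝ := (∑ i, θ i * (v i : ℝ)) / (∑ i, (v i : ℝ)) with hμ
    have hK' : (∑ i, θ i * (Module.finrank ℂ (K i) : ℝ))
        < μ * (∑ i, (Module.finrank ℂ (K i) : ℝ)) := by
      rw [div_lt_iff₀ hKpos] at ineqK
      linarith
    have hM' : (∑ i, θ i * (Module.finrank ℂ (M i) : ℝ))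
        < μ * (∑ i, (Module.finrank ℂ (M i) : ℝ)) := by
      rw [div_lt_iff₀ hMpos] at ineqM
      linarith
    have hμV : μ * (∑ i, (v i : ℝ)) = ∑ i, θ i * (v i : ℝ) := by
      rw [hμ, div_mul_cancel₀]
      exact ne_of_gt hVpos
    have hexp : μ * (∑ i, (Module.finrank ℂ (K i) : ℝ))
        + μ * (∑ i, (Module.finrank ℂ (M i) : ℝ)) = ∑ i, θ i * (v i : ℝ) := by
      rw [← mul_add, hsum1, hμV]
    linarith
  have hgc : ∀ (i : I) (u : Fin (v i) → ℂ), g i u = c • u := by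
    intro i u
    have hu : u ∈ LinearMap.ker (φ i) := by rw [main i]; trivial
    have : φ i u = 0 := hu
    rw [hφapp] at this
    exact sub_eq_zero.mp this
  refine ⟨c, ?_, hgc⟩
  intro hc0
  have : g i0 u0 = 0 := by rw [hgc i0 u0, hc0, zero_smul]
  have : u0 = 0 := by
    have := (g i0).injective (by simpa using this)
    simpa using this
  exact hu0.2 (by simp [this])
end

section
/- Let (x, j) be a framed representation of Q such that the only subrepresentation S of x with S_i ⊆ ker j_i for every i ∈ I is the zero family. If g = (g_i) ∈ G_v satisfies g_{t(e)} ∘ x_e = x_e ∘ g_{s(e)} for every edge e and j_i ∘ g_i = j_i for every i ∈ I, then g_i = Id_{ℂ^{v(i)}} for every i ∈ I. (The group G_v acts freely on the set of semistable framed representations, and every semistable framed representation is stable.) -/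
/-! The defect `gᵢ - 1` of an automorphism `g` of the framed representation `(x, j)` has image
a subrepresentation of `x` (since `g` commutes with `x`) contained in `ker j` (since `j ∘ g = j`).
Semistability forces this image to vanish, i.e. `g = 1`. -/

theorem LinearMap.map_range_le_range_of_comp_eq {R M N : Type*} [Semiring R]
    [AddCommMonoid M] [AddCommMonoid N] [Module R M] [Module R N]
    {a : M →ₗ[R] M} {b : N →ₗ[R] N} {f : M →ₗ[R] N} (h : f ∘ₗ a = b ∘ₗ f) :
    (LinearMap.range a).map f ≤ LinearMap.range b := by
  rw [← LinearMap.range_comp, h]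
  exact LinearMap.range_comp_le_range f b

theorem framed_semistable_free_action_general
    {I E : Type} (s t : E → I) (v w : I → ℕ)
    (x : ∀ e : E, (Fin (v (s e)) → ℂ) →ₗ[ℂ] (Fin (v (t e)) → ℂ))
    (j : ∀ i : I, (Fin (v i) → ℂ) →ₗ[ℂ] (Fin (w i) → ℂ))
    (hss : ∀ S : ∀ i : I, Submodule ℂ (Fin (v i) → ℂ),
      (∀ e : E, (S (s e)).map (x e) ≤ S (t e)) →
      (∀ i, S i ≤ LinearMap.ker (j i)) → ∀ i, S i = ⊥)
    (g : ∀ i : I, (Fin (v i) → ℂ) ≃ₗ[ℂ] (Fin (v i) → ℂ))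
    (hgx : ∀ (e : E) (u : Fin (v (s e)) → ℂ), g (t e) (x e u) = x e (g (s e) u))
    (hgj : ∀ (i : I) (u : Fin (v i) → ℂ), j i (g i u) = j i u) :
    ∀ (i : I) (u : Fin (v i) → ℂ), g i u = u := by
  have hsub : ∀ e, (LinearMap.range ((g (s e)).toLinearMap - 1)).map (x e) ≤
      LinearMap.range ((g (t e)).toLinearMap - 1) := fun e =>
    LinearMap.map_range_le_range_of_comp_eq (by ext u; simp [hgx])
  have hker : ∀ i, LinearMap.range ((g i).toLinearMap - 1) ≤ LinearMap.ker (j i) := fun i =>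
    LinearMap.range_le_ker_iff.2 (by ext u; simp [hgj])
  intro i u
  have hg : (g i).toLinearMap = 1 :=
    sub_eq_zero.1 (LinearMap.range_eq_bot.1 (hss _ hsub hker i))
  exact LinearMap.congr_fun hg u

/-- The group `G_v` acts freely on the set of semistable framed representations of a quiver
(and every semistable framed representation is stable): if `(x, j)` is a framed
representation such that the only subrepresentation `S` of `x` with `S i ⊆ ker (j i)` for
all `i` is zero, then any `g ∈ G_v` intertwining `x` and satisfying `jᵢ ∘ gᵢ = jᵢ` is the
identity. -/
theorem framed_semistable_free_action
    {I E : Type} [Fintype I] [Fintype E] (s t : E → I) (v w : I → ℕ)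
    (x : ∀ e : E, (Fin (v (s e)) → ℂ) →ₗ[ℂ] (Fin (v (t e)) → ℂ))
    (j : ∀ i : I, (Fin (v i) → ℂ) →ₗ[ℂ] (Fin (w i) → ℂ))
    (hss : ∀ S : ∀ i : I, Submodule ℂ (Fin (v i) → ℂ),
      (∀ e : E, (S (s e)).map (x e) ≤ S (t e)) →
      (∀ i, S i ≤ LinearMap.ker (j i)) → ∀ i, S i = ⊥)
    (g : ∀ i : I, (Fin (v i) → ℂ) ≃ₗ[ℂ] (Fin (v i) → ℂ))
    (hgx : ∀ (e : E) (u : Fin (v (s e)) → ℂ), g (t e) (x e u) = x e (g (s e) u))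
    (hgj : ∀ (i : I) (u : Fin (v i) → ℂ), j i (g i u) = j i u) :
    ∀ (i : I) (u : Fin (v i) → ℂ), g i u = u :=
  framed_semistable_free_action_general s t v w x j hss g hgx hgj
end

section
/- Let r, v_1, …, v_n be natural numbers, and let j : ℂ^{v_1} → ℂ^r and x_k : ℂ^{v_k} → ℂ^{v_{k−1}} (for 2 ≤ k ≤ n) be ℂ-linear maps. Then the following are equivalent: (a) the only family of linear subspaces S_k ⊆ ℂ^{v_k} (1 ≤ k ≤ n) satisfying x_k(S_k) ⊆ S_{k−1} for all 2 ≤ k ≤ n and S_1 ⊆ ker j is the zero family S_1 = ⋯ = S_n = 0; (b) the map j and all the maps x_2, …, x_n are injective. -/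
/-!
A family `S` with `S 0 = ⊥` and `f k (S (k+1)) ⊆ S k` is contained, degree by degree, in the
family of kernels of the composites `M k → M 0`, which is itself such a family. Condition (a)
therefore says that these iterated kernels vanish, and inductively on `k` this says that every
`f k` has trivial kernel.
-/

namespace ChainOfLinearMaps

variable {R : Type*} [Ring R] {n : ℕ} {M : Fin (n + 1) → Type*}
  [∀ k, AddCommGroup (M k)] [∀ k, Module R (M k)]
  (f : ∀ k : Fin n, M k.succ →ₗ[R] M k.castSucc)

/-- The kernel of the composite `M k → ⋯ → M 0`. -/
def iterKer : ∀ k : Fin (n + 1), Submodule R (M k) :=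
  Fin.induction ⊥ fun k S => S.comap (f k)

@[simp]
theorem iterKer_zero : iterKer f 0 = ⊥ :=
  Fin.induction_zero _ _

theorem iterKer_succ (k : Fin n) :
    iterKer f k.succ = (iterKer f k.castSucc).comap (f k) :=
  Fin.induction_succ _ _ k

theorem map_iterKer_succ_le (k : Fin n) :
    (iterKer f k.succ).map (f k) ≤ iterKer f k.castSucc := by
  rw [iterKer_succ]
  exact Submodule.map_comap_le _ _

theorem le_iterKer (S : ∀ k : Fin (n + 1), Submodule R (M k)) (h0 : S 0 = ⊥)
    (hS : ∀ k : Fin n, (S k.succ).map (f k) ≤ S k.castSucc) (k : Fin (n + 1)) :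
    S k ≤ iterKer f k := by
  induction k using Fin.induction with
  | zero => simp [h0]
  | succ k ih =>
    rw [iterKer_succ, ← Submodule.map_le_iff_le_comap]
    exact (hS k).trans ih

theorem forall_eq_bot_iff_iterKer_eq_bot :
    (∀ S : ∀ k : Fin (n + 1), Submodule R (M k),
        S 0 = ⊥ → (∀ k : Fin n, (S k.succ).map (f k) ≤ S k.castSucc) → ∀ k, S k = ⊥)
      ↔ ∀ k, iterKer f k = ⊥ :=
  ⟨fun H => H (iterKer f) (iterKer_zero f) (map_iterKer_succ_le f),
    fun H S h0 hS k => eq_bot_iff.mpr <| H k ▸ le_iterKer f S h0 hS k⟩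

theorem iterKer_eq_bot_iff_injective :
    (∀ k, iterKer f k = ⊥) ↔ ∀ k : Fin n, Function.Injective (f k) := by
  simp_rw [← LinearMap.ker_eq_bot]
  constructor
  · intro H k
    rw [← Submodule.comap_bot, ← H k.castSucc, ← iterKer_succ, H]
  · intro H k
    induction k using Fin.induction with
    | zero => exact iterKer_zero f
    | succ k ih => rw [iterKer_succ, ih, Submodule.comap_bot, H]

end ChainOfLinearMaps

open ChainOfLinearMaps in
theorem typeA_framed_semistable_iff_injective_general
    (n : ℕ) (d : Fin (n + 1) → ℕ)
    (f : ∀ k : Fin n, (Fin (d k.succ) → ℂ) →ₗ[ℂ] (Fin (d k.castSucc) → ℂ)) :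
    (∀ S : ∀ k : Fin (n + 1), Submodule ℂ (Fin (d k) → ℂ),
        S 0 = ⊥ →
        (∀ k : Fin n, (S k.succ).map (f k) ≤ S k.castSucc) →
        ∀ k, S k = ⊥)
      ↔ ∀ k : Fin n, Function.Injective (f k) :=
  (forall_eq_bot_iff_iterKer_eq_bot (M := fun k => Fin (d k) → ℂ) f).trans
    (iterKer_eq_bot_iff_injective (M := fun k => Fin (d k) → ℂ) f)

/-- Stability analysis for framed representations of the type `A_n` Dynkin quiver with
framing vector `w = (r, 0, …, 0)`.  We encode the framed representation as a single chain
of linear maps `ℂ^{d n} → ⋯ → ℂ^{d 1} → ℂ^{d 0} = ℂ^r`, where `f 0 = j` is the framing map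
and `f k = x_{k+1}` for `k ≥ 1`.  A family of subspaces `S k ⊆ ℂ^{d k}` with `S 0 = ⊥` and
`f k (S (k+1)) ⊆ S k` is exactly a subrepresentation contained in `ker j`.  Then: no such
family is nonzero iff `j` and all the `x_k` are injective. -/
theorem typeA_framed_semistable_iff_injective
    (n r : ℕ) (d : Fin (n + 1) → ℕ) (hd : d 0 = r)
    (f : ∀ k : Fin n, (Fin (d k.succ) → ℂ) →ₗ[ℂ] (Fin (d k.castSucc) → ℂ)) :
    (∀ S : ∀ k : Fin (n + 1), Submodule ℂ (Fin (d k) → ℂ),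
        S 0 = ⊥ →
        (∀ k : Fin n, (S k.succ).map (f k) ≤ S k.castSucc) →
        ∀ k, S k = ⊥)
      ↔ ∀ k : Fin n, Function.Injective (f k) :=
  typeA_framed_semistable_iff_injective_general n d f
end

section
/- Let V be an n-dimensional complex vector space and x, y ∈ End(V) linear operators such that the commutator [x, y] = x∘y − y∘x is a nilpotent operator of rank at most one (note that since Tr[x,y] = 0, a commutator of rank at most one is automatically nilpotent). Then x and y are simultaneously triangularizable: there exists a complete flag 0 = W_0 ⊆ W_1 ⊆ ⋯ ⊆ W_n = V of linear subspaces with dim W_k = k, x(W_k) ⊆ W_k and y(W_k) ⊆ W_k for every k. Equivalently, there is a basis of V in which the matrices of both x and y are upper triangular. -/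
/-!
Let `N = xy - yx`. A common eigenvector of `x` and `y` is found by induction on the dimension:
pick an eigenvalue `μ` of `x`. If `N` vanishes on the `μ`-eigenspace `E` of `x`, then `y`
preserves `E` and an eigenvector of `y` on `E` will do. Otherwise `N v ≠ 0` for some `v ∈ E`,
and `N v = (x - μ) (y v)`; as `N` has rank at most one, `range N ⊆ range (x - μ)`. Hence
`y (x - μ) = (x - μ) y - N` shows that the nonzero proper subspace `range (x - μ)` is invariant
under `x` and `y`, and we recurse into it. Passing to the quotient by the line spanned by a
common eigenvector keeps the rank of the commutator at most one, so the flag is built by the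
same kind of induction.
-/

open Module LinearMap Submodule

section

variable {K V : Type*} [Field K] [AddCommGroup V] [Module K V]

theorem Submodule.finrank_comap_mkQ [FiniteDimensional K V] (L : Submodule K V)
    (p : Submodule K (V ⧸ L)) :
    finrank K (p.comap L.mkQ) = finrank K p + finrank K L := by
  let f := L.mkQ.domRestrict (p.comap L.mkQ)
  have hrange : range f = p := by
    rw [range_domRestrict, map_comap_eq_of_surjective L.mkQ_surjective]
  have hker : ker f ≃ₗ[K] L := by
    rw [ker_domRestrict, ker_mkQ]
    exact comapSubtypeEquivOfLe (L.le_comap_mkQ p)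
  rw [← f.finrank_range_add_finrank_ker, hrange, hker.finrank_eq]

theorem LinearMap.finrank_range_restrict_le [FiniteDimensional K V] {f : Module.End K V}
    {p : Submodule K V} (hf : p ≤ p.comap f) :
    finrank K (range (f.restrict hf)) ≤ finrank K (range f) := by
  rw [range_restrict, (comapSubtypeEquivOfLe (map_le_iff_le_comap.2 hf)).finrank_eq]
  exact finrank_mono map_le_range

theorem LinearMap.finrank_range_mapQ_le [FiniteDimensional K V] {f : Module.End K V}
    {p : Submodule K V} (hf : p ≤ p.comap f) :
    finrank K (range (p.mapQ p f hf)) ≤ finrank K (range f) := by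
  rw [range_mapQ]
  exact finrank_map_le _ _

theorem LinearMap.range_le_of_finrank_range_le_one [FiniteDimensional K V] {f : Module.End K V}
    (hf : finrank K (range f) ≤ 1) {v : V} (hv : f v ≠ 0) {p : Submodule K V} (hp : f v ∈ p) :
    range f ≤ p := by
  have hspan : K ∙ f v = range f :=
    eq_of_le_of_finrank_le ((span_singleton_le_iff_mem _ _).2 (mem_range_self f v))
      (by rwa [finrank_span_singleton hv])
  rwa [← hspan, span_singleton_le_iff_mem]

theorem LinearMap.mem_span_singleton_of_restrict {f : Module.End K V} {p : Submodule K V}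
    (hf : p ≤ p.comap f) {v : p} (h : f.restrict hf v ∈ K ∙ v) : f v ∈ K ∙ (v : V) := by
  obtain ⟨c, hc⟩ := mem_span_singleton.1 h
  exact mem_span_singleton.2 ⟨c, by simpa using congrArg Subtype.val hc⟩

namespace Module.End

variable {x y : Module.End K V}

theorem finrank_range_restrict_commutator_le [FiniteDimensional K V] {p : Submodule K V}
    (hx : p ≤ p.comap x) (hy : p ≤ p.comap y) :
    finrank K (range (x.restrict hx ∘ₗ y.restrict hy - y.restrict hy ∘ₗ x.restrict hx)) ≤
      finrank K (range (x ∘ₗ y - y ∘ₗ x)) := by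
  have hN : p ≤ p.comap (x ∘ₗ y - y ∘ₗ x) := fun _ hv ↦ p.sub_mem (hx (hy hv)) (hy (hx hv))
  have hres : x.restrict hx ∘ₗ y.restrict hy - y.restrict hy ∘ₗ x.restrict hx =
      (x ∘ₗ y - y ∘ₗ x).restrict hN := by
    ext; simp
  rw [hres]
  exact finrank_range_restrict_le hN

theorem finrank_range_mapQ_commutator_le [FiniteDimensional K V] {p : Submodule K V}
    (hx : p ≤ p.comap x) (hy : p ≤ p.comap y) :
    finrank K (range (p.mapQ p x hx ∘ₗ p.mapQ p y hy - p.mapQ p y hy ∘ₗ p.mapQ p x hx)) ≤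
      finrank K (range (x ∘ₗ y - y ∘ₗ x)) := by
  have hN : p ≤ p.comap (x ∘ₗ y - y ∘ₗ x) := fun _ hv ↦ p.sub_mem (hx (hy hv)) (hy (hx hv))
  have hquot : p.mapQ p x hx ∘ₗ p.mapQ p y hy - p.mapQ p y hy ∘ₗ p.mapQ p x hx =
      p.mapQ p (x ∘ₗ y - y ∘ₗ x) hN := by
    ext; simp
  rw [hquot]
  exact finrank_range_mapQ_le hN

theorem eigenspace_le_comap_of_le_ker_commutator {μ : K}
    (h : x.eigenspace μ ≤ ker (x ∘ₗ y - y ∘ₗ x)) :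
    x.eigenspace μ ≤ (x.eigenspace μ).comap y := by
  intro v hv
  have hxy : x (y v) = y (x v) := sub_eq_zero.1 (h hv)
  rw [mem_comap, mem_eigenspace_iff, hxy, mem_eigenspace_iff.1 hv, map_smul]

theorem exists_common_eigenvector_of_eigenspace_le_ker_commutator [IsAlgClosed K]
    [FiniteDimensional K V] {μ : K} (hμ : x.HasEigenvalue μ)
    (h : x.eigenspace μ ≤ ker (x ∘ₗ y - y ∘ₗ x)) :
    ∃ v : V, v ≠ 0 ∧ x v ∈ K ∙ v ∧ y v ∈ K ∙ v := by
  have : Nontrivial (x.eigenspace μ) := nontrivial_iff_ne_bot.2 hμ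
  have hyE := eigenspace_le_comap_of_le_ker_commutator h
  obtain ⟨ν, hν⟩ := exists_eigenvalue (y.restrict hyE)
  obtain ⟨w, hw⟩ := hν.exists_hasEigenvector
  refine ⟨w, by simpa using hw.2, ?_, mem_span_singleton_of_restrict hyE ?_⟩
  · exact mem_span_singleton.2 ⟨μ, (mem_eigenspace_iff.1 w.2).symm⟩
  · exact mem_span_singleton.2 ⟨ν, hw.apply_eq_smul.symm⟩

theorem range_sub_smul_one_le_comap_self (μ : K) :
    range (x - μ • 1) ≤ (range (x - μ • 1)).comap x := by
  rintro _ ⟨u, rfl⟩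
  exact ⟨x u, by simp⟩

theorem range_sub_smul_one_le_comap {μ : K}
    (h : range (x ∘ₗ y - y ∘ₗ x) ≤ range (x - μ • 1)) :
    range (x - μ • 1) ≤ (range (x - μ • 1)).comap y := by
  rintro _ ⟨u, rfl⟩
  have hy : y ((x - μ • 1) u) = (x - μ • 1) (y u) - (x ∘ₗ y - y ∘ₗ x) u := by
    simp only [LinearMap.sub_apply, LinearMap.smul_apply, one_apply, comp_apply, map_sub,
      map_smul]
    abel
  rw [mem_comap, hy]
  exact sub_mem (mem_range_self _ _) (h (mem_range_self _ _))

theorem exists_invariant_ne_bot_ne_top_of_not_eigenspace_le_ker_commutator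
    [FiniteDimensional K V] (hrk : finrank K (range (x ∘ₗ y - y ∘ₗ x)) ≤ 1) {μ : K}
    (h : ¬ x.eigenspace μ ≤ ker (x ∘ₗ y - y ∘ₗ x)) :
    ∃ p : Submodule K V, p ≠ ⊥ ∧ p ≠ ⊤ ∧ p ≤ p.comap x ∧ p ≤ p.comap y := by
  obtain ⟨v, hv, hNv⟩ := SetLike.not_le_iff_exists.1 h
  have hxv := mem_eigenspace_iff.1 hv
  have hNv_mem : (x ∘ₗ y - y ∘ₗ x) v ∈ range (x - μ • 1) := ⟨y v, by simp [hxv]⟩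
  refine ⟨range (x - μ • 1), (Submodule.ne_bot_iff _).2 ⟨_, hNv_mem, hNv⟩, fun htop ↦ ?_,
    range_sub_smul_one_le_comap_self μ,
    range_sub_smul_one_le_comap (range_le_of_finrank_range_le_one hrk hNv hNv_mem)⟩
  have hinj : Function.Injective (x - μ • (1 : Module.End K V)) :=
    injective_iff_surjective.2 (range_eq_top.1 htop)
  have hv0 : v = 0 := hinj (by simp [hxv])
  exact hNv (by simp [hv0])

theorem exists_common_eigenvector_of_finrank_range_commutator_le_one [IsAlgClosed K]
    [FiniteDimensional K V] [Nontrivial V] (hrk : finrank K (range (x ∘ₗ y - y ∘ₗ x)) ≤ 1) :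
    ∃ v : V, v ≠ 0 ∧ x v ∈ K ∙ v ∧ y v ∈ K ∙ v := by
  induction hn : finrank K V using Nat.strong_induction_on generalizing V with
  | _ n ih =>
  obtain ⟨μ, hμ⟩ := x.exists_eigenvalue
  by_cases hE : x.eigenspace μ ≤ ker (x ∘ₗ y - y ∘ₗ x)
  · exact exists_common_eigenvector_of_eigenspace_le_ker_commutator hμ hE
  obtain ⟨p, hp_bot, hp_top, hxp, hyp⟩ :=
    exists_invariant_ne_bot_ne_top_of_not_eigenspace_le_ker_commutator hrk hE
  have : Nontrivial p := nontrivial_iff_ne_bot.2 hp_bot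
  obtain ⟨w, hw, hxw, hyw⟩ := ih _ (hn ▸ finrank_lt hp_top)
    ((finrank_range_restrict_commutator_le hxp hyp).trans hrk) rfl
  exact ⟨w, by simpa using hw, mem_span_singleton_of_restrict hxp hxw,
    mem_span_singleton_of_restrict hyp hyw⟩

end Module.End

def IsCompleteFlag {n : ℕ} (W : Fin (n + 1) → Submodule K V) : Prop :=
  Monotone W ∧ W 0 = ⊥ ∧ W (Fin.last n) = ⊤ ∧ ∀ k, finrank K (W k) = k

def Submodule.consComapMkQ (L : Submodule K V) {n : ℕ} (W : Fin (n + 1) → Submodule K (V ⧸ L)) :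
    Fin (n + 2) → Submodule K V :=
  Fin.cons ⊥ fun i ↦ (W i).comap L.mkQ

theorem IsCompleteFlag.consComapMkQ [FiniteDimensional K V] {L : Submodule K V}
    (hL : finrank K L = 1) {n : ℕ} {W : Fin (n + 1) → Submodule K (V ⧸ L)}
    (hW : IsCompleteFlag W) : IsCompleteFlag (L.consComapMkQ W) := by
  obtain ⟨hmono, -, htop, hrank⟩ := hW
  refine ⟨Fin.monotone_iff_le_succ.2 fun i ↦ ?_, rfl, ?_, fun k ↦ ?_⟩
  · cases i using Fin.cases with
    | zero => exact bot_le
    | succ i => exact comap_mono (hmono i.castSucc_le_succ)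
  · rw [Submodule.consComapMkQ, ← Fin.succ_last, Fin.cons_succ, htop, comap_top]
  · cases k using Fin.cases with
    | zero => rw [Submodule.consComapMkQ, Fin.cons_zero, finrank_bot, Fin.val_zero]
    | succ i =>
      rw [Submodule.consComapMkQ, Fin.cons_succ, finrank_comap_mkQ, hrank, hL, Fin.val_succ]

theorem Submodule.map_consComapMkQ_le {L : Submodule K V} {f : Module.End K V}
    (hf : L ≤ L.comap f) {n : ℕ} {W : Fin (n + 1) → Submodule K (V ⧸ L)}
    (hW : ∀ k, (W k).map (L.mapQ L f hf) ≤ W k) (k : Fin (n + 2)) :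
    (L.consComapMkQ W k).map f ≤ L.consComapMkQ W k := by
  rw [map_le_iff_le_comap]
  cases k using Fin.cases with
  | zero => exact bot_le
  | succ i =>
    rw [consComapMkQ, Fin.cons_succ, ← comap_comp, ← mapQ_mkQ L L f (h := hf), comap_comp]
    exact comap_mono (map_le_iff_le_comap.1 (hW i))

theorem Module.End.exists_isCompleteFlag_of_finrank_range_commutator_le_one [IsAlgClosed K]
    [FiniteDimensional K V] {x y : Module.End K V}
    (hrk : finrank K (range (x ∘ₗ y - y ∘ₗ x)) ≤ 1) :
    ∃ W : Fin (finrank K V + 1) → Submodule K V,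
      IsCompleteFlag W ∧ ∀ k, (W k).map x ≤ W k ∧ (W k).map y ≤ W k := by
  induction hn : finrank K V generalizing V with
  | zero =>
    have : Subsingleton V := finrank_zero_iff.1 hn
    refine ⟨fun _ ↦ ⊥, ⟨monotone_const, rfl, Subsingleton.elim _ _, fun k ↦ ?_⟩, by simp⟩
    rw [finrank_bot, Fin.fin_one_eq_zero k, Fin.val_zero]
  | succ n ih =>
    have : Nontrivial V := nontrivial_of_finrank_eq_succ hn
    obtain ⟨v, hv, hxv, hyv⟩ := exists_common_eigenvector_of_finrank_range_commutator_le_one hrk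
    set L := K ∙ v
    have hxL : L ≤ L.comap x := (span_singleton_le_iff_mem _ _).2 hxv
    have hyL : L ≤ L.comap y := (span_singleton_le_iff_mem _ _).2 hyv
    have hL : finrank K L = 1 := finrank_span_singleton hv
    obtain ⟨W, hW, hinv⟩ := ih ((finrank_range_mapQ_commutator_le hxL hyL).trans hrk)
      (by have := Submodule.finrank_quotient_add_finrank L; omega)
    exact ⟨L.consComapMkQ W, hW.consComapMkQ hL, fun k ↦
      ⟨map_consComapMkQ_le hxL (fun k ↦ (hinv k).1) k,
        map_consComapMkQ_le hyL (fun k ↦ (hinv k).2) k⟩⟩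

end

theorem simultaneously_triangularizable_of_rank_one_commutator_general
    (V : Type*) [AddCommGroup V] [Module ℂ V] [FiniteDimensional ℂ V]
    (x y : V →ₗ[ℂ] V)
    (hrk : Module.finrank ℂ (LinearMap.range (x ∘ₗ y - y ∘ₗ x)) ≤ 1) :
    ∃ W : Fin (Module.finrank ℂ V + 1) → Submodule ℂ V,
      Monotone W ∧ W 0 = ⊥ ∧ W (Fin.last (Module.finrank ℂ V)) = ⊤ ∧
      (∀ k, Module.finrank ℂ (W k) = (k : ℕ)) ∧
      (∀ k, (W k).map x ≤ W k ∧ (W k).map y ≤ W k) := by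
  obtain ⟨W, ⟨hmono, hbot, htop, hrank⟩, hinv⟩ :=
    Module.End.exists_isCompleteFlag_of_finrank_range_commutator_le_one hrk
  exact ⟨W, hmono, hbot, htop, hrank, hinv⟩

/-- If the commutator `[x, y]` of two endomorphisms of an `n`-dimensional complex vector
space is nilpotent of rank at most one, then `x` and `y` are simultaneously
triangularizable: there is a complete flag of subspaces invariant under both. -/
theorem simultaneously_triangularizable_of_rank_one_commutator
    (V : Type*) [AddCommGroup V] [Module ℂ V] [FiniteDimensional ℂ V]
    (x y : V →ₗ[ℂ] V)
    (hnil : IsNilpotent (x ∘ₗ y - y ∘ₗ x))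
    (hrk : Module.finrank ℂ (LinearMap.range (x ∘ₗ y - y ∘ₗ x)) ≤ 1) :
    ∃ W : Fin (Module.finrank ℂ V + 1) → Submodule ℂ V,
      Monotone W ∧ W 0 = ⊥ ∧ W (Fin.last (Module.finrank ℂ V)) = ⊤ ∧
      (∀ k, Module.finrank ℂ (W k) = (k : ℕ)) ∧
      (∀ k, (W k).map x ≤ W k ∧ (W k).map y ≤ W k) :=
  simultaneously_triangularizable_of_rank_one_commutator_general V x y hrk
end

section
/- Let V be a finite-dimensional complex vector space, x, y ∈ End(V), i ∈ V a vector and j : V → ℂ a linear functional, satisfying the moment-map equation x∘y − y∘x + i⊗j = 0. Assume i is a cyclic vector for the pair (x, y), i.e. the only linear subspace S ⊆ V with x(S) ⊆ S, y(S) ⊆ S and i ∈ S is S = V. Then j = 0, and consequently x and y commute. -/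
open LinearMap

namespace FramingAux

variable {V : Type*} [AddCommGroup V] [Module ℂ V]

/-- word in `x` (true) and `y` (false) -/
def wrd (x y : Module.End ℂ V) : List Bool → Module.End ℂ V
  | [] => 1
  | b :: t => (cond b x y) * wrd x y t

lemma wrd_append (x y : Module.End ℂ V) :
    ∀ u v : List Bool, wrd x y (u ++ v) = wrd x y u * wrd x y v
  | [], v => by simp [wrd]
  | b :: t, v => by simp [wrd, wrd_append x y t v, mul_assoc]

lemma wrd_replicate_true (x y : Module.End ℂ V) :
    ∀ k, wrd x y (List.replicate k true) = x ^ k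
  | 0 => by simp [wrd]
  | k+1 => by
      rw [List.replicate_succ]
      show x * wrd x y (List.replicate k true) = x ^ (k+1)
      rw [wrd_replicate_true x y k, pow_succ']

lemma wrd_replicate_false (x y : Module.End ℂ V) :
    ∀ k, wrd x y (List.replicate k false) = y ^ k
  | 0 => by simp [wrd]
  | k+1 => by
      rw [List.replicate_succ]
      show y * wrd x y (List.replicate k false) = y ^ (k+1)
      rw [wrd_replicate_false x y k, pow_succ']

/-- number of inversions: pairs (false before true) -/
def inv : List Bool → ℕ
  | [] => 0
  | b :: t => (cond b 0 (t.count true)) + inv t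

lemma inv_append : ∀ u v : List Bool,
    inv (u ++ v) = inv u + inv v + u.count false * v.count true
  | [], v => by simp [inv]
  | b :: t, v => by
      cases b <;>
      simp [inv, inv_append t v, List.count_append, List.count_cons] <;> ring

/-- sorted form: all trues then all falses -/
def canon (l : List Bool) : List Bool :=
  List.replicate (l.count true) true ++ List.replicate (l.count false) false

lemma canon_cons_true (t : List Bool) : canon (true :: t) = true :: canon t := by
  simp [canon, List.count_cons, List.replicate_succ]

lemma canon_cons_false_of (t : List Bool) (h : t.count true = 0) :
    canon (false :: t) = false :: canon t := by
  simp [canon, List.count_cons, List.replicate_succ, h]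

lemma count_tf : ∀ l : List Bool, l.count true + l.count false = l.length
  | [] => rfl
  | b :: t => by
      have := count_tf t
      cases b <;> simp [List.count_cons] <;> omega

lemma sorted_or_swap : ∀ l : List Bool,
    l = canon l ∨ ∃ u v, l = u ++ false :: true :: v
  | [] => Or.inl (by simp [canon])
  | true :: t => by
      rcases sorted_or_swap t with h | ⟨u, v, rfl⟩
      · exact Or.inl (by rw [canon_cons_true, ← h])
      · exact Or.inr ⟨true :: u, v, rfl⟩
  | false :: t => by
      rcases sorted_or_swap t with h | ⟨u, v, rfl⟩
      · rcases hct : t.count true with _ | m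
        · exact Or.inl (by rw [canon_cons_false_of t hct, ← h])
        · refine Or.inr ⟨[], List.replicate m true ++ List.replicate (t.count false) false, ?_⟩
          have : t = true :: (List.replicate m true ++ List.replicate (t.count false) false) := by
            conv_lhs => rw [h]
            rw [canon, hct, List.replicate_succ]
            rfl
          conv_lhs => rw [this]
          simp
      · exact Or.inr ⟨false :: u, v, rfl⟩

lemma inv_swap (u v : List Bool) :
    inv (u ++ false :: true :: v) = inv (u ++ true :: false :: v) + 1 := by
  rw [inv_append, inv_append]
  simp [inv, List.count_cons]
  ring

lemma canon_swap (u v : List Bool) :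
    canon (u ++ true :: false :: v) = canon (u ++ false :: true :: v) := by
  have hperm : (u ++ true :: false :: v).Perm (u ++ false :: true :: v) :=
    List.Perm.append_left u (List.Perm.swap _ _ _)
  rw [canon, canon, hperm.count_eq, hperm.count_eq]

variable [FiniteDimensional ℂ V]

lemma trace_smulRight' (j : V →ₗ[ℂ] ℂ) (v : V) : trace ℂ V (j.smulRight v) = j v := by
  have h : j.smulRight v = (toSpanSingleton ℂ V v) ∘ₗ j := by
    ext u; simp [toSpanSingleton_apply]
  rw [h, trace_comp_comm']
  have h2 : (j ∘ₗ toSpanSingleton ℂ V v) = j v • (1 : ℂ →ₗ[ℂ] ℂ) := by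
    ext a
    simp [toSpanSingleton_apply, mul_comm]
  rw [h2, map_smul, trace_one, Module.finrank_self]
  simp

lemma key (x y : Module.End ℂ V) (i : V) (j : V →ₗ[ℂ] ℂ)
    (hc : y * x = x * y + j.smulRight i) :
    ∀ l : List Bool, j (wrd x y l i) = 0 := by
  classical
  set c : Module.End ℂ V := j.smulRight i with hcdef
  have hτc : ∀ p : Module.End ℂ V, trace ℂ V (p * c) = j (p i) := by
    intro p
    have hpc : p * c = j.smulRight (p i) := by
      ext u; simp [hcdef, mul_apply]
    rw [hpc]; exact trace_smulRight' j (p i)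
  suffices H : ∀ n, ∀ l : List Bool, l.length = n → j (wrd x y l i) = 0 by
    exact fun l => H l.length l rfl
  intro n
  induction n using Nat.strong_induction_on with
  | _ n IH =>
  intro l hln
  have IH' : ∀ m : List Bool, m.length < n → j (wrd x y m i) = 0 := fun m h => IH _ h m rfl
  -- Step A: adjacent swap identity
  have swap : ∀ u v : List Bool, u.length + v.length + 2 = n →
      j (wrd x y (u ++ false :: true :: v) i) = j (wrd x y (u ++ true :: false :: v) i) := by
    intro u v hl
    have e : wrd x y (false :: true :: v) = wrd x y (true :: false :: v) + c * wrd x y v := by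
      show y * (x * wrd x y v) = x * (y * wrd x y v) + c * wrd x y v
      rw [← mul_assoc, ← mul_assoc, hc, add_mul]
    have h1 : wrd x y (u ++ false :: true :: v)
        = wrd x y (u ++ true :: false :: v) + wrd x y u * c * wrd x y v := by
      rw [wrd_append, wrd_append, e, mul_add, mul_assoc]
    rw [h1]
    have hv : j (wrd x y v i) = 0 := IH' v (by omega)
    simp [mul_apply, hcdef, hv]
  -- Step B: sorting
  have sortEq : ∀ k, ∀ m : List Bool, m.length = n → inv m ≤ k →
      j (wrd x y m i) = j (wrd x y (canon m) i) := by
    intro k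
    induction k with
    | zero =>
        intro m hmn hinv
        rcases sorted_or_swap m with h | ⟨u, v, rfl⟩
        · rw [← h]
        · rw [inv_swap] at hinv; omega
    | succ k IHk =>
        intro m hmn hinv
        rcases sorted_or_swap m with h | ⟨u, v, rfl⟩
        · rw [← h]
        · have hlen : u.length + v.length + 2 = n := by
            simp at hmn; omega
          have hlen2 : (u ++ true :: false :: v).length = n := by
            simp at hmn ⊢; omega
          rw [swap u v hlen, ← canon_swap]
          exact IHk _ hlen2 (by rw [inv_swap] at hinv; omega)
  -- commuting x past y^b
  have hy : ∀ b : ℕ, y ^ b * x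
      = x * y ^ b + ∑ s ∈ Finset.range b, y ^ s * c * y ^ (b - 1 - s) := by
    intro b
    induction b with
    | zero => simp
    | succ b IHb =>
        have h1 : ∀ s, s < b → y ^ (s+1) * c * y ^ (b + 1 - 1 - (s+1))
            = y * (y ^ s * c * y ^ (b - 1 - s)) := by
          intro s hs
          have he : b + 1 - 1 - (s + 1) = b - 1 - s := by omega
          rw [he, pow_succ']
          simp only [mul_assoc]
        have hsum : ∑ s ∈ Finset.range (b+1), y ^ s * c * y ^ (b + 1 - 1 - s)
            = (∑ s ∈ Finset.range b, y * (y ^ s * c * y ^ (b - 1 - s))) + c * y ^ b := by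
          rw [Finset.sum_range_succ']
          have h0 : y ^ 0 * c * y ^ (b + 1 - 1 - 0) = c * y ^ b := by simp
          rw [h0]
          congr 1
          exact Finset.sum_congr rfl fun s hs => h1 s (Finset.mem_range.mp hs)
        calc y ^ (b+1) * x = y * (y ^ b * x) := by rw [pow_succ', mul_assoc]
          _ = y * (x * y ^ b) + ∑ s ∈ Finset.range b, y * (y ^ s * c * y ^ (b - 1 - s)) := by
              rw [IHb, mul_add, Finset.mul_sum]
          _ = x * y ^ (b+1) + c * y ^ b
              + ∑ s ∈ Finset.range b, y * (y ^ s * c * y ^ (b - 1 - s)) := by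
              rw [← mul_assoc, hc, add_mul, mul_assoc, ← pow_succ']
          _ = x * y ^ (b+1) + ∑ s ∈ Finset.range (b+1), y ^ s * c * y ^ (b + 1 - 1 - s) := by
              rw [hsum]; abel
  -- Step C: sorted words vanish
  have sortedZero : ∀ a b : ℕ, a + b = n → j ((x ^ a * y ^ b) i) = 0 := by
    intro a b hab
    set φ := j ((x ^ a * y ^ b) i) with hφ
    have hterm : ∀ s ∈ Finset.range b,
        trace ℂ V (x ^ a * y ^ s * c * y ^ (b - s)) = φ := by
      intro s hs
      have hs' : s < b := Finset.mem_range.mp hs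
      have h1 : trace ℂ V (x ^ a * y ^ s * c * y ^ (b - s))
          = trace ℂ V ((y ^ (b - s) * (x ^ a * y ^ s)) * c) := by
        rw [trace_mul_comm, ← mul_assoc]
      rw [h1, hτc]
      have hw : y ^ (b - s) * (x ^ a * y ^ s)
          = wrd x y (List.replicate (b-s) false ++ (List.replicate a true ++ List.replicate s false)) := by
        rw [wrd_append, wrd_append, wrd_replicate_false, wrd_replicate_true, wrd_replicate_false]
      rw [hw]
      have hlen : (List.replicate (b-s) false
          ++ (List.replicate a true ++ List.replicate s false)).length = n := by
        simp; omega
      rw [sortEq _ _ hlen le_rfl]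
      have hcan : canon (List.replicate (b-s) false
            ++ (List.replicate a true ++ List.replicate s false))
          = List.replicate a true ++ List.replicate b false := by
        rw [canon]
        congr 1 <;> congr 1 <;>
          simp [List.count_append, List.count_replicate] <;> omega
      rw [hcan, hφ, wrd_append, wrd_replicate_true, wrd_replicate_false]
    have hmain : φ = trace ℂ V ((x ^ a * y ^ b) * c) := (hτc _).symm
    have hc' : c = y * x - x * y := by rw [hc]; abel
    have B1 : (x ^ a * y ^ b) * (y * x) = (x ^ a * y ^ (b+1)) * x := by noncomm_ring
    have B2 : (x ^ a * y ^ b) * (x * y) = (x ^ a * (y ^ b * x)) * y := by noncomm_ring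
    have e2 : (x ^ a * y ^ b) * c
        = (x ^ a * y ^ (b+1)) * x - (x ^ a * (y ^ b * x)) * y := by
      rw [hc', mul_sub, B1, B2]
    have C1 : x * (x ^ a * y ^ (b+1)) = x ^ (a+1) * y ^ (b+1) := by rw [← mul_assoc, ← pow_succ']
    have T1 : trace ℂ V ((x ^ a * y ^ (b+1)) * x) = trace ℂ V (x ^ (a+1) * y ^ (b+1)) := by
      rw [trace_mul_comm, C1]
    have A1 : (x ^ a * (x * y ^ b)) * y = x ^ (a+1) * y ^ (b+1) := by noncomm_ring
    have A2 : ∀ s, s < b →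
        (x ^ a * (y ^ s * c * y ^ (b - 1 - s))) * y = x ^ a * y ^ s * c * y ^ (b - s) := by
      intro s hs
      have he : b - 1 - s + 1 = b - s := by omega
      calc (x ^ a * (y ^ s * c * y ^ (b - 1 - s))) * y
          = x ^ a * y ^ s * c * (y ^ (b - 1 - s) * y) := by noncomm_ring
        _ = x ^ a * y ^ s * c * y ^ (b - s) := by rw [← pow_succ, he]
    have T2 : trace ℂ V ((x ^ a * (y ^ b * x)) * y)
        = trace ℂ V (x ^ (a+1) * y ^ (b+1))
          + ∑ s ∈ Finset.range b, trace ℂ V (x ^ a * y ^ s * c * y ^ (b - s)) := by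
      rw [hy b, mul_add, add_mul, map_add, A1]
      congr 1
      rw [Finset.mul_sum, Finset.sum_mul, map_sum]
      exact Finset.sum_congr rfl fun s hs => by rw [A2 s (Finset.mem_range.mp hs)]
    have comb : φ = trace ℂ V ((x ^ a * y ^ (b+1)) * x)
        - trace ℂ V ((x ^ a * (y ^ b * x)) * y) := by
      rw [hmain, e2, map_sub]
    rw [T1, T2, Finset.sum_congr rfl hterm] at comb
    simp only [Finset.sum_const, Finset.card_range, nsmul_eq_mul] at comb
    have hval : ((b : ℂ) + 1) * φ = 0 := by linear_combination comb
    have hb1 : ((b : ℂ) + 1) ≠ 0 := Nat.cast_add_one_ne_zero b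
    have := mul_eq_zero.mp hval
    tauto
  -- conclusion for l
  rw [sortEq (inv l) l hln le_rfl]
  have hcw : wrd x y (canon l) = x ^ (l.count true) * y ^ (l.count false) := by
    rw [canon, wrd_append, wrd_replicate_true, wrd_replicate_false]
  rw [hcw]
  exact sortedZero _ _ (by rw [count_tf]; exact hln)

end FramingAux

/-- If `x∘y − y∘x + i⊗j = 0` and `i` is a cyclic vector for `(x, y)` (the only subspace
invariant under `x` and `y` containing `i` is the whole space), then `j = 0` and `x`, `y`
commute.  Here `i⊗j` is the rank-at-most-one operator `u ↦ j(u) • i`. -/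
theorem framing_covector_vanishes_of_cyclic
    (V : Type*) [AddCommGroup V] [Module ℂ V] [FiniteDimensional ℂ V]
    (x y : V →ₗ[ℂ] V) (i : V) (j : V →ₗ[ℂ] ℂ)
    (heq : x ∘ₗ y - y ∘ₗ x + j.smulRight i = 0)
    (hcyc : ∀ S : Submodule ℂ V, S.map x ≤ S → S.map y ≤ S → i ∈ S → S = ⊤) :
    j = 0 ∧ x ∘ₗ y = y ∘ₗ x := by
  have hc : y * x = x * y + j.smulRight i := by
    have h : x * y - y * x + j.smulRight i = 0 := by
      simpa [Module.End.mul_eq_comp] using heq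
    have h2 : y * x - (x * y + j.smulRight i)
        = -(x * y - y * x + j.smulRight i) := by abel
    rw [h, neg_zero, sub_eq_zero] at h2
    exact h2
  have hall : ∀ l : List Bool, j (FramingAux.wrd x y l i) = 0 :=
    FramingAux.key x y i j hc
  set S : Submodule ℂ V :=
    Submodule.span ℂ (Set.range fun l : List Bool => FramingAux.wrd x y l i) with hS
  have hxS : S.map x ≤ S := by
    rw [hS, Submodule.map_span]
    apply Submodule.span_mono
    rintro _ ⟨_, ⟨l, rfl⟩, rfl⟩
    exact ⟨true :: l, rfl⟩
  have hyS : S.map y ≤ S := by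
    rw [hS, Submodule.map_span]
    apply Submodule.span_mono
    rintro _ ⟨_, ⟨l, rfl⟩, rfl⟩
    exact ⟨false :: l, rfl⟩
  have hiS : i ∈ S := Submodule.subset_span ⟨[], rfl⟩
  have htop : S = ⊤ := hcyc S hxS hyS hiS
  have hker : S ≤ LinearMap.ker j := by
    rw [hS, Submodule.span_le]
    rintro _ ⟨l, rfl⟩
    exact hall l
  have hj : j = 0 := by
    ext v
    have hv : v ∈ S := htop ▸ Submodule.mem_top
    simpa using hker hv
  refine ⟨hj, ?_⟩
  have h0 : (0 : V →ₗ[ℂ] ℂ).smulRight i = 0 := by ext u; simp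
  rw [hj, h0, add_zero] at heq
  exact sub_eq_zero.mp heq
end

section
/- Let V be a finite-dimensional complex vector space, x, y ∈ End(V), i ∈ V, j : V → ℂ a linear functional, and λ ∈ ℂ with λ ≠ 0, satisfying the moment-map equation x∘y − y∘x + i⊗j = λ·Id_V. Then every linear subspace S ⊆ V with x(S) ⊆ S, y(S) ⊆ S and i ∈ S equals V; in particular, i is a cyclic vector for the pair (x, y). -/
/-!
Pass to the quotient `V ⧸ S`. Since `i ∈ S`, the rank-one term `i⊗j` dies there, so the
operators induced by `x` and `y` satisfy `[x̄, ȳ] = λ·Id`. A commutator has trace zero while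
`λ·Id` has trace `λ · dim (V ⧸ S)`, so in characteristic zero `V ⧸ S = 0`, i.e. `S = V`.
-/

open Module

namespace LinearMap

theorem subsingleton_of_commutator_eq_smul_id {K W : Type*} [Field K] [CharZero K]
    [AddCommGroup W] [Module K W] [FiniteDimensional K W] (a b : W →ₗ[K] W) {c : K}
    (hc : c ≠ 0) (h : a ∘ₗ b - b ∘ₗ a = c • LinearMap.id) : Subsingleton W := by
  have htrace := congrArg (trace K W) h
  rw [map_sub, trace_comp_comm', sub_self, map_smul, trace_id, smul_eq_mul, eq_comm,
    mul_eq_zero, Nat.cast_eq_zero, finrank_zero_iff] at htrace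
  exact htrace.resolve_left hc

theorem mapQ_commutator_eq_smul_id {R M : Type*} [CommRing R] [AddCommGroup M] [Module R M]
    {x y : M →ₗ[R] M} {i : M} {j : M →ₗ[R] R} {c : R}
    (heq : x ∘ₗ y - y ∘ₗ x + j.smulRight i = c • LinearMap.id)
    {S : Submodule R M} (hx : S ≤ S.comap x) (hy : S ≤ S.comap y) (hi : i ∈ S) :
    S.mapQ S x hx ∘ₗ S.mapQ S y hy - S.mapQ S y hy ∘ₗ S.mapQ S x hx = c • LinearMap.id := by
  ext w
  have hw : S.mkQ ((x ∘ₗ y - y ∘ₗ x + j.smulRight i) w) = S.mkQ (c • w) := by rw [heq]; rfl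
  simpa [(Submodule.Quotient.mk_eq_zero S).mpr hi] using hw

end LinearMap

/-- If `x∘y − y∘x + i⊗j = λ·Id` with `λ ≠ 0`, then every subspace invariant under `x` and
`y` and containing `i` is the whole space; in particular `i` is a cyclic vector for
`(x, y)`.  Here `i⊗j` is the rank-at-most-one operator `u ↦ j(u) • i`. -/
theorem cyclic_of_moment_map_value_nonzero
    (V : Type*) [AddCommGroup V] [Module ℂ V] [FiniteDimensional ℂ V]
    (x y : V →ₗ[ℂ] V) (i : V) (j : V →ₗ[ℂ] ℂ) (lam : ℂ) (hlam : lam ≠ 0)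
    (heq : x ∘ₗ y - y ∘ₗ x + j.smulRight i = lam • (LinearMap.id : V →ₗ[ℂ] V)) :
    ∀ S : Submodule ℂ V, S.map x ≤ S → S.map y ≤ S → i ∈ S → S = ⊤ := by
  intro S hxS hyS hiS
  have hx := Submodule.map_le_iff_le_comap.mp hxS
  have hy := Submodule.map_le_iff_le_comap.mp hyS
  have := LinearMap.subsingleton_of_commutator_eq_smul_id _ _ hlam
    (LinearMap.mapQ_commutator_eq_smul_id heq hx hy hiS)
  exact Submodule.Quotient.subsingleton_iff.mp this
end

section
/- Let V be a finite-dimensional complex vector space, x, y ∈ End(V), i ∈ V, j : V → ℂ a linear functional, and λ ∈ ℂ with λ ≠ 0, satisfying x∘y − y∘x + i⊗j = λ·Id_V. If g : V → V is an invertible linear map with g∘x = x∘g, g∘y = y∘g and g(i) = i, then g = Id_V. (Thus GL(V) acts freely on the space of such quadruples, the Calogero–Moser space being the quotient.) -/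
/-!
The fixed subspace `U = ker (g - 1)` contains `i` and, since `g` commutes with `x` and `y`, is
stable under both. On `V ⧸ U` the rank-one term `i ⊗ j` vanishes, so the induced maps satisfy
`[x̄, ȳ] = λ · Id`; taking traces gives `λ · dim (V ⧸ U) = 0`, hence `U = V`.
-/

namespace CalogeroMoser

theorem eqLocus_id_le_comap {R M : Type*} [Semiring R] [AddCommMonoid M] [Module R M]
    {g x : M →ₗ[R] M} (hgx : ∀ u, g (x u) = x (g u)) :
    LinearMap.eqLocus g LinearMap.id ≤ (LinearMap.eqLocus g LinearMap.id).comap x := by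
  intro u hu
  simp only [Submodule.mem_comap, LinearMap.mem_eqLocus, LinearMap.id_apply] at hu ⊢
  rw [hgx, hu]

variable {K V : Type*} [Field K] [CharZero K] [AddCommGroup V] [Module K V]
  [FiniteDimensional K V]

theorem subsingleton_of_sub_comp_eq_smul_id {x y : V →ₗ[K] V} {lam : K} (hlam : lam ≠ 0)
    (h : x ∘ₗ y - y ∘ₗ x = lam • LinearMap.id) : Subsingleton V := by
  have htr := congrArg (LinearMap.trace K V) h
  rw [map_sub, LinearMap.trace_comp_comm', sub_self, map_smul, LinearMap.trace_id,
    smul_eq_mul, eq_comm, mul_eq_zero] at htr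
  exact Module.finrank_zero_iff.mp (by exact_mod_cast htr.resolve_left hlam)

theorem eq_top_of_mem_of_le_comap {x y : V →ₗ[K] V} {i : V} {j : V →ₗ[K] K} {lam : K}
    (hlam : lam ≠ 0) (heq : x ∘ₗ y - y ∘ₗ x + j.smulRight i = lam • LinearMap.id)
    {W : Submodule K V} (hi : i ∈ W) (hx : W ≤ W.comap x) (hy : W ≤ W.comap y) : W = ⊤ := by
  have hquot : W.mapQ W x hx ∘ₗ W.mapQ W y hy - W.mapQ W y hy ∘ₗ W.mapQ W x hx =
      lam • LinearMap.id := by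
    ext u
    have hu := LinearMap.congr_fun heq u
    simp only [LinearMap.add_apply, LinearMap.sub_apply, LinearMap.comp_apply,
      LinearMap.smulRight_apply, LinearMap.smul_apply, LinearMap.id_apply] at hu
    simp only [LinearMap.sub_apply, LinearMap.comp_apply, Submodule.mkQ_apply,
      Submodule.mapQ_apply, LinearMap.smul_apply, LinearMap.id_apply,
      ← Submodule.Quotient.mk_sub, ← Submodule.Quotient.mk_smul, ← hu,
      Submodule.Quotient.eq]
    simpa using W.smul_mem (j u) hi
  have := subsingleton_of_sub_comp_eq_smul_id hlam hquot
  exact Submodule.Quotient.subsingleton_iff.mp this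

end CalogeroMoser

open CalogeroMoser in
/-- `GL(V)` acts freely on the space of quadruples `(x, y, i, j)` satisfying the
Calogero–Moser moment map equation `x∘y − y∘x + i⊗j = λ·Id` with `λ ≠ 0`: any invertible
linear map `g` commuting with `x` and `y` and fixing `i` is the identity. -/
theorem calogero_moser_free_action
    (V : Type*) [AddCommGroup V] [Module ℂ V] [FiniteDimensional ℂ V]
    (x y : V →ₗ[ℂ] V) (i : V) (j : V →ₗ[ℂ] ℂ) (lam : ℂ) (hlam : lam ≠ 0)
    (heq : x ∘ₗ y - y ∘ₗ x + j.smulRight i = lam • (LinearMap.id : V →ₗ[ℂ] V))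
    (g : V ≃ₗ[ℂ] V)
    (hgx : ∀ u, g (x u) = x (g u)) (hgy : ∀ u, g (y u) = y (g u)) (hgi : g i = i) :
    ∀ u, g u = u := by
  have hfix : LinearMap.eqLocus (g : V →ₗ[ℂ] V) LinearMap.id = ⊤ :=
    eq_top_of_mem_of_le_comap hlam heq hgi (eqLocus_id_le_comap hgx) (eqLocus_id_le_comap hgy)
  exact LinearMap.congr_fun (LinearMap.eqLocus_eq_top.mp hfix)
end

section
/- Let V and V' be complex vector spaces of the same finite dimension n. Let x, y ∈ End(V) be commuting operators and i ∈ V a cyclic vector for (x, y) (the only subspace of V containing i and invariant under both x and y is V itself); similarly let x', y' ∈ End(V') be commuting operators with cyclic vector i' ∈ V'. If for every polynomial f ∈ ℂ[X, Y] one has f(x, y)(i) = 0 ⟺ f(x', y')(i') = 0, then there exists a ℂ-linear isomorphism g : V → V' with x' = g∘x∘g^{-1}, y' = g∘y∘g^{-1} and i' = g(i). (The assignment (x,y,i) ↦ J_{x,y,i} := {f ∈ ℂ[X,Y] | f(x,y)(i) = 0} separates base-change orbits.) -/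
/-!
Both triples are quotients of the free module `ℂ[X,Y]`: cyclicity makes `f ↦ f(x, y) i`
surjective onto `V`, with kernel the annihilator ideal `J_{x,y,i}`. Equal annihilators give
`V ≅ ℂ[X,Y] / J ≅ V'`, and this isomorphism intertwines `x, y` with `x', y'` because both
are induced by multiplication by `X` and `Y`.
-/

open Polynomial

theorem Polynomial.commute_aeval_left {R A : Type*} [CommSemiring R] [Semiring A]
    [Algebra R A] {x y : A} (h : Commute x y) (p : R[X]) : Commute (aeval x p) y :=
  (Algebra.commute_of_mem_adjoin_singleton_of_commute (aeval_mem_adjoin_singleton R x)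
    h.symm).symm

namespace LinearMap

variable {R M N N' : Type*} [CommRing R] [AddCommGroup M] [Module R M]
  [AddCommGroup N] [Module R N] [AddCommGroup N'] [Module R N']

theorem exists_linearEquiv_comp_eq_of_ker_eq (E : M →ₗ[R] N) (E' : M →ₗ[R] N')
    (hE : Function.Surjective E) (hE' : Function.Surjective E') (h : ker E = ker E') :
    ∃ g : N ≃ₗ[R] N', ∀ m, g (E m) = E' m :=
  ⟨(E.quotKerEquivOfSurjective hE).symm ≪≫ₗ Submodule.quotEquivOfEq _ _ h ≪≫ₗ
      E'.quotKerEquivOfSurjective hE',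
    fun m => by simp [Submodule.quotEquivOfEq_mk]⟩

theorem apply_apply_eq_of_comp_eq {E : M →ₗ[R] N} {E' : M →ₗ[R] N'} {g : N →ₗ[R] N'}
    (hE : Function.Surjective E) (hg : ∀ m, g (E m) = E' m) {φ : M → M} {x : N → N}
    {x' : N' → N'} (hx : ∀ m, E (φ m) = x (E m)) (hx' : ∀ m, E' (φ m) = x' (E' m)) (u : N) :
    g (x u) = x' (g u) := by
  obtain ⟨m, rfl⟩ := hE u
  rw [← hx, hg, hg, hx']

end LinearMap

namespace Module.End

variable {R V : Type*} [CommRing R] [AddCommGroup V] [Module R V]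

/-- `f ↦ f(x, y) i`, the outer variable of `R[X][X]` playing the role of `Y`. -/
noncomputable def orbitMap (x y : Module.End R V) (hxy : Commute x y) (i : V) :
    R[X][X] →ₗ[R] V :=
  LinearMap.applyₗ i ∘ₗ (eval₂AlgHom (aeval x) y (commute_aeval_left hxy)).toLinearMap

variable (x y : Module.End R V) (hxy : Commute x y) (i : V)

theorem orbitMap_apply (f : R[X][X]) :
    orbitMap x y hxy i f = eval₂ (aeval x).toRingHom y f i :=
  rfl

theorem orbitMap_one : orbitMap x y hxy i 1 = i := by
  simp [orbitMap]

theorem orbitMap_C_X_mul (f : R[X][X]) :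
    orbitMap x y hxy i (C X * f) = x (orbitMap x y hxy i f) := by
  simp only [orbitMap, LinearMap.comp_apply, AlgHom.toLinearMap_apply, map_mul]
  simp

theorem orbitMap_X_mul (f : R[X][X]) :
    orbitMap x y hxy i (X * f) = y (orbitMap x y hxy i f) := by
  simp only [orbitMap, LinearMap.comp_apply, AlgHom.toLinearMap_apply, map_mul]
  simp

theorem orbitMap_surjective
    (hcyc : ∀ S : Submodule R V, S.map x ≤ S → S.map y ≤ S → i ∈ S → S = ⊤) :
    Function.Surjective (orbitMap x y hxy i) := by
  rw [← LinearMap.range_eq_top]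
  apply hcyc
  · rintro _ ⟨_, ⟨f, rfl⟩, rfl⟩
    exact ⟨C X * f, orbitMap_C_X_mul x y hxy i f⟩
  · rintro _ ⟨_, ⟨f, rfl⟩, rfl⟩
    exact ⟨X * f, orbitMap_X_mul x y hxy i f⟩
  · exact ⟨1, orbitMap_one x y hxy i⟩

end Module.End

open Module.End

theorem cyclic_triples_conjugate_of_same_annihilator_general
    (V V' : Type*) [AddCommGroup V] [Module ℂ V]
    [AddCommGroup V'] [Module ℂ V']
    (x y : Module.End ℂ V) (hxy : x * y = y * x)
    (x' y' : Module.End ℂ V') (hxy' : x' * y' = y' * x')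
    (i : V) (i' : V')
    (hcyc : ∀ S : Submodule ℂ V, S.map x ≤ S → S.map y ≤ S → i ∈ S → S = ⊤)
    (hcyc' : ∀ S : Submodule ℂ V', S.map x' ≤ S → S.map y' ≤ S → i' ∈ S → S = ⊤)
    (hann : ∀ f : Polynomial (Polynomial ℂ),
      Polynomial.eval₂ (Polynomial.aeval x).toRingHom y f i = 0 ↔
        Polynomial.eval₂ (Polynomial.aeval x').toRingHom y' f i' = 0) :
    ∃ g : V ≃ₗ[ℂ] V',
      (∀ u, g (x u) = x' (g u)) ∧ (∀ u, g (y u) = y' (g u)) ∧ g i = i' := by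
  have hc : Commute x y := hxy
  have hc' : Commute x' y' := hxy'
  have hE := orbitMap_surjective x y hc i hcyc
  have hker : LinearMap.ker (orbitMap x y hc i) = LinearMap.ker (orbitMap x' y' hc' i') := by
    ext f
    simpa only [LinearMap.mem_ker, orbitMap_apply] using hann f
  obtain ⟨g, hg⟩ := LinearMap.exists_linearEquiv_comp_eq_of_ker_eq _ _ hE
    (orbitMap_surjective x' y' hc' i' hcyc') hker
  refine ⟨g, ?_, ?_, ?_⟩
  · exact LinearMap.apply_apply_eq_of_comp_eq (g := g.toLinearMap) hE hg
      (orbitMap_C_X_mul x y hc i) (orbitMap_C_X_mul x' y' hc' i')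
  · exact LinearMap.apply_apply_eq_of_comp_eq (g := g.toLinearMap) hE hg
      (orbitMap_X_mul x y hc i) (orbitMap_X_mul x' y' hc' i')
  · rw [← orbitMap_one x y hc i, hg, orbitMap_one]

/-- The assignment `(x, y, i) ↦ J_{x,y,i} = {f ∈ ℂ[X,Y] | f(x,y)(i) = 0}` separates
base-change orbits: two triples consisting of a pair of commuting operators together with a
cyclic vector, on complex vector spaces of the same finite dimension `n`, are conjugate by
a linear isomorphism iff they have the same annihilator ideal.  Two-variable polynomials
are encoded as `ℂ[X][Y]`, and `f(x, y)` is the evaluation `eval₂ (aeval x) y f`, well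
defined since `x` and `y` commute. -/
theorem cyclic_triples_conjugate_of_same_annihilator
    (V V' : Type*) [AddCommGroup V] [Module ℂ V] [FiniteDimensional ℂ V]
    [AddCommGroup V'] [Module ℂ V'] [FiniteDimensional ℂ V']
    (n : ℕ) (hdim : Module.finrank ℂ V = n) (hdim' : Module.finrank ℂ V' = n)
    (x y : Module.End ℂ V) (hxy : x * y = y * x)
    (x' y' : Module.End ℂ V') (hxy' : x' * y' = y' * x')
    (i : V) (i' : V')
    (hcyc : ∀ S : Submodule ℂ V, S.map x ≤ S → S.map y ≤ S → i ∈ S → S = ⊤)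
    (hcyc' : ∀ S : Submodule ℂ V', S.map x' ≤ S → S.map y' ≤ S → i' ∈ S → S = ⊤)
    (hann : ∀ f : Polynomial (Polynomial ℂ),
      Polynomial.eval₂ (Polynomial.aeval x).toRingHom y f i = 0 ↔
        Polynomial.eval₂ (Polynomial.aeval x').toRingHom y' f i' = 0) :
    ∃ g : V ≃ₗ[ℂ] V',
      (∀ u, g (x u) = x' (g u)) ∧ (∀ u, g (y u) = y' (g u)) ∧ g i = i' :=
  cyclic_triples_conjugate_of_same_annihilator_general V V' x y hxy x' y' hxy' i i' hcyc hcyc' hann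
end
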